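/- arXiv:2110.07637 — 2 statements merged into one kernel-verified Lean document; each statement's English description precedes it below -/
import Mathlib

section
/- Let n be an odd positive integer, a > 0, and let α, λ, g₀ be nonzero real numbers with αλ > 0, αg₀ > 0, |g₀| < 2|α|, and |λ| > 2|α| K a^{n+1}, where K = (1/(n+1)) · (n/(n+1))^n. Then for every t ∈ ℝ, t^n (t − a) g₀ + λ ≠ 0. -/
/-!
Write `K = (1/(n+1)) (n/(n+1))^n`. For `t ≥ 0` the function `t^n (a - t)` is maximal at
`t = n a/(n+1)`, where it equals `K a^(n+1)`; for `t ≤ 0` and odd `n` the product `t^n (t - a)`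
is nonnegative. Hence `t^n (t - a) ≥ -K a^(n+1)` on all of `ℝ`. Since `λ` and `g₀` have the
same sign and `|λ| > 2|α| K a^(n+1) ≥ |g₀| K a^(n+1)`, the ratio `λ/g₀` exceeds `K a^(n+1)`, so
`t^n (t - a) + λ/g₀ > 0`.
-/

theorem pow_mul_sub_le {n : ℕ} (hn : 0 < n) {a t : ℝ} (ha : 0 ≤ a) (ht : 0 ≤ t) :
    t ^ n * (a - t) ≤ 1 / ((n : ℝ) + 1) * ((n : ℝ) / ((n : ℝ) + 1)) ^ n * a ^ (n + 1) := by
  rcases ht.eq_or_lt with rfl | ht_pos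
  · rw [zero_pow hn.ne', zero_mul]
    positivity
  set c := (n : ℝ) * a / (n + 1) with hc
  -- Bernoulli's inequality at `c / t` is the tangent-line bound `c^(n+1) ≥ t^(n+1) + (n+1) t^n (c - t)`.
  have bernoulli := one_add_mul_sub_le_pow (a := c / t) (by
    have : 0 ≤ c / t := by positivity
    linarith) (n + 1)
  refine le_of_mul_le_mul_left ?_ (Nat.cast_pos.mpr hn : (0 : ℝ) < n)
  calc (n : ℝ) * (t ^ n * (a - t))
      = t ^ (n + 1) * (1 + ↑(n + 1) * (c / t - 1)) := by
        rw [hc]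
        push_cast
        field_simp
        ring
    _ ≤ t ^ (n + 1) * (c / t) ^ (n + 1) := by gcongr
    _ = c ^ (n + 1) := by rw [div_pow, mul_div_cancel₀ _ (pow_pos ht_pos (n + 1)).ne']
    _ = n * (1 / ((n : ℝ) + 1) * ((n : ℝ) / ((n : ℝ) + 1)) ^ n * a ^ (n + 1)) := by
        rw [hc, div_pow, div_pow, mul_pow]
        field_simp
        ring

theorem Odd.neg_le_pow_mul_sub {n : ℕ} (hn : Odd n) {a : ℝ} (ha : 0 ≤ a) (t : ℝ) :
    -(1 / ((n : ℝ) + 1) * ((n : ℝ) / ((n : ℝ) + 1)) ^ n * a ^ (n + 1)) ≤ t ^ n * (t - a) := by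
  rcases le_total t 0 with ht | ht
  · have hprod : 0 ≤ t ^ n * (t - a) :=
      mul_nonneg_of_nonpos_of_nonpos (hn.pow_nonpos ht) (by linarith)
    have : 0 ≤ 1 / ((n : ℝ) + 1) * ((n : ℝ) / ((n : ℝ) + 1)) ^ n * a ^ (n + 1) := by positivity
    linarith
  · have := pow_mul_sub_le hn.pos ha ht
    linarith [mul_neg (t ^ n) (a - t)]

theorem odd_modification_no_real_root_general (n : ℕ) (hn : Odd n)
    (a : ℝ) (ha : 0 < a) (α lam g₀ : ℝ)
    (hαlam : α * lam > 0) (hαg : α * g₀ > 0) (hgsmall : |g₀| < 2 * |α|)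
    (hlambig : |lam| > 2 * |α| * ((1 / ((n : ℝ) + 1)) * ((n : ℝ) / ((n : ℝ) + 1)) ^ n)
        * a ^ (n + 1)) (t : ℝ) :
    t ^ n * (t - a) * g₀ + lam ≠ 0 := by
  set M := 1 / ((n : ℝ) + 1) * ((n : ℝ) / ((n : ℝ) + 1)) ^ n * a ^ (n + 1) with hM
  have hM₀ : 0 ≤ M := by positivity
  have hg₀ : g₀ ≠ 0 := by rintro rfl; simp at hαg
  have hratio_pos : 0 < lam / g₀ := by
    rw [← mul_div_mul_left lam g₀ (left_ne_zero_of_mul hαg.ne')]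
    exact div_pos hαlam hαg
  have hratio : M < lam / g₀ := by
    rw [← abs_of_pos hratio_pos, abs_div, lt_div_iff₀ (abs_pos.mpr hg₀)]
    calc M * |g₀| ≤ M * (2 * |α|) := by gcongr
      _ < |lam| := by rw [hM]; linarith
  have hbound := hn.neg_le_pow_mul_sub ha.le t
  intro hroot
  have hroot_div : t ^ n * (t - a) + lam / g₀ = 0 := by
    rw [← mul_div_cancel_right₀ (t ^ n * (t - a)) hg₀, ← add_div, hroot, zero_div]
  linarith

/-- For `n` odd positive, `a > 0`, and nonzero reals `α, λ, g₀` with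
`αλ > 0`, `αg₀ > 0`, `|g₀| < 2|α|` and `|λ| > 2|α| K a^(n+1)` where
`K = (1/(n+1)) (n/(n+1))^n`, one has `t^n (t − a) g₀ + λ ≠ 0` for every `t ∈ ℝ`. -/
theorem odd_modification_no_real_root (n : ℕ) (hn : Odd n) (hn' : 0 < n)
    (a : ℝ) (ha : 0 < a) (α lam g₀ : ℝ)
    (hα : α ≠ 0) (hlam : lam ≠ 0) (hg₀ : g₀ ≠ 0)
    (hαlam : α * lam > 0) (hαg : α * g₀ > 0) (hgsmall : |g₀| < 2 * |α|)
    (hlambig : |lam| > 2 * |α| * ((1 / ((n : ℝ) + 1)) * ((n : ℝ) / ((n : ℝ) + 1)) ^ n)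
        * a ^ (n + 1)) (t : ℝ) :
    t ^ n * (t - a) * g₀ + lam ≠ 0 :=
  odd_modification_no_real_root_general n hn a ha α lam g₀ hαlam hαg hgsmall hlambig t
end

section
/- Let n be an even positive integer, a > 0, and let α, λ, g₀ be nonzero real numbers with αλ > 0, αg₀ > 0, |g₀| < 2|α|, and |λ| > 2|α| K a^{n+1}, where K = (1/(n+2)) · (n/(n+2))^{n/2}. Then for every t ∈ ℝ, t^n (t² − a²) g₀ + 2aλ ≠ 0. -/
/-!
For `t² > a²` both summands of `t^n (t² − a²) g₀ + 2aλ` have the sign of `α`, so they cannot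
cancel. For `t² ≤ a²` we have `|t^n (t² − a²)| ≤ 2K a^(n+2)`, the maximum of `x^m (a² − x)` over
`0 ≤ x ≤ a²` (with `n = 2m`), which follows from Bernoulli's inequality; hence the first summand
has modulus below `2|α| · 2K a^(n+2) < 2a|λ|`.
-/

/-- The paper's `K`: for even `n`, `2 K a^(n+2)` is the maximum of `|t^n (t² − a²)|` over
`|t| ≤ a`, attained at `t² = n a² / (n + 2)`. -/
noncomputable def peakConst (n : ℕ) : ℝ :=
  1 / ((n : ℝ) + 2) * ((n : ℝ) / ((n : ℝ) + 2)) ^ (n / 2)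

lemma two_mul_peakConst_add_self (m : ℕ) :
    2 * peakConst (m + m) = (m : ℝ) ^ m / ((m : ℝ) + 1) ^ (m + 1) := by
  have hm : ((m : ℝ) + 1) ≠ 0 := by positivity
  rw [peakConst, show (m + m) / 2 = m by omega, Nat.cast_add,
    show (m : ℝ) + m + 2 = 2 * ((m : ℝ) + 1) by ring, show (m : ℝ) + m = 2 * m by ring,
    mul_div_mul_left _ _ two_ne_zero, div_pow]
  field_simp
  ring

lemma one_add_pow_mul_one_sub_mul_le_one (m : ℕ) {s : ℝ} (hs₁ : -1 ≤ s) (hs₂ : s ≤ 1) :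
    (1 + s) ^ m * (1 - m * s) ≤ 1 := by
  have hpow : 0 ≤ (1 + s) ^ m := pow_nonneg (by linarith) m
  rcases le_or_gt (1 - m * s) 0 with hneg | hpos
  · nlinarith [mul_nonpos_of_nonneg_of_nonpos hpow hneg]
  have hbernoulli : 1 - m * s ≤ (1 - s) ^ m := by
    simpa [← sub_eq_add_neg] using one_add_mul_le_pow (a := -s) (by linarith) m
  calc (1 + s) ^ m * (1 - m * s) ≤ (1 + s) ^ m * (1 - s) ^ m := by gcongr
    _ = (1 - s ^ 2) ^ m := by rw [← mul_pow]; ring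
    _ ≤ 1 := pow_le_one₀ (by nlinarith) (by nlinarith)

lemma pow_mul_sub_le_s11 (m : ℕ) {x b : ℝ} (hx : 0 ≤ x) (hxb : x ≤ b) :
    x ^ m * (b - x) ≤ (m : ℝ) ^ m / ((m : ℝ) + 1) ^ (m + 1) * b ^ (m + 1) := by
  rcases Nat.eq_zero_or_pos m with rfl | hm
  · simpa using hx
  rcases hx.eq_or_lt with rfl | hx
  · rw [zero_pow hm.ne', zero_mul]
    positivity
  have hm : (1 : ℝ) ≤ m := by exact_mod_cast hm
  have hb : 0 < b := hx.trans_le hxb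
  -- Bernoulli at `s = ((m + 1) x − m b) / (m b)`, so that `1 + s = (m + 1) x / (m b)`.
  have key := one_add_pow_mul_one_sub_mul_le_one m (s := ((m + 1) * x - m * b) / (m * b))
    (by rw [le_div_iff₀ (by positivity)]; nlinarith)
    (by rw [div_le_iff₀ (by positivity)]; nlinarith [mul_le_mul_of_nonneg_left hm hb.le])
  rw [show 1 + ((m + 1) * x - m * b) / (m * b) = (m + 1) * x / (m * b) by field_simp; ring,
    show 1 - m * (((m + 1) * x - m * b) / (m * b)) = (m + 1) * (b - x) / b by field_simp; ring,
    div_pow, mul_pow, mul_pow, div_mul_div_comm, div_le_one (by positivity)] at key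
  rw [div_mul_eq_mul_div, le_div_iff₀ (by positivity)]
  calc x ^ m * (b - x) * ((m : ℝ) + 1) ^ (m + 1)
      = ((m : ℝ) + 1) ^ m * x ^ m * ((m + 1) * (b - x)) := by ring
    _ ≤ m ^ m * b ^ m * b := key
    _ = m ^ m * b ^ (m + 1) := by ring

lemma abs_pow_mul_sq_sub_sq_le {n : ℕ} (hn : Even n) {t a : ℝ} (ht : t ^ 2 ≤ a ^ 2) :
    |t ^ n * (t ^ 2 - a ^ 2)| ≤ 2 * peakConst n * a ^ (n + 2) := by
  obtain ⟨m, rfl⟩ := hn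
  have hsq : t ^ (m + m) = (t ^ 2) ^ m := by rw [← pow_mul, two_mul]
  rw [two_mul_peakConst_add_self, hsq, abs_of_nonpos (mul_nonpos_of_nonneg_of_nonpos
    (by positivity) (by linarith)), show a ^ (m + m + 2) = (a ^ 2) ^ (m + 1) by ring]
  linarith [pow_mul_sub_le_s11 m (sq_nonneg t) ht]

lemma pow_mul_sq_sub_sq_pos {n : ℕ} (hn : Even n) {t a : ℝ} (ht : a ^ 2 < t ^ 2) :
    0 < t ^ n * (t ^ 2 - a ^ 2) := by
  have ht0 : t ≠ 0 := by rintro rfl; nlinarith [sq_nonneg a]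
  exact mul_pos (hn.pow_pos ht0) (by linarith)

theorem even_modification_no_real_root_general (n : ℕ) (hn : Even n)
    (a : ℝ) (ha : 0 < a) (α lam g₀ : ℝ)
    (hαlam : α * lam > 0) (hαg : α * g₀ > 0) (hgsmall : |g₀| < 2 * |α|)
    (hlamtbig : |lam| > 2 * |α| * ((1 / ((n : ℝ) + 2)) * ((n : ℝ) / ((n : ℝ) + 2)) ^ (n / 2))
        * a ^ (n + 1)) (t : ℝ) :
    t ^ n * (t ^ 2 - a ^ 2) * g₀ + 2 * a * lam ≠ 0 := by
  intro hroot
  rcases le_or_gt (t ^ 2) (a ^ 2) with hin | hout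
  · rw [← peakConst] at hlamtbig
    have hpeak := abs_pow_mul_sq_sub_sq_le hn hin
    have hlt : |t ^ n * (t ^ 2 - a ^ 2) * g₀| < |2 * a * lam| :=
      calc |t ^ n * (t ^ 2 - a ^ 2) * g₀| = |t ^ n * (t ^ 2 - a ^ 2)| * |g₀| := abs_mul _ _
        _ ≤ 2 * peakConst n * a ^ (n + 2) * (2 * |α|) :=
          mul_le_mul hpeak hgsmall.le (abs_nonneg _) ((abs_nonneg _).trans hpeak)
        _ = 2 * a * (2 * |α| * peakConst n * a ^ (n + 1)) := by ring
        _ < 2 * a * |lam| := by gcongr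
        _ = |2 * a * lam| := by rw [abs_mul, abs_of_pos (by positivity : 0 < 2 * a)]
    rw [eq_neg_of_add_eq_zero_left hroot, abs_neg] at hlt
    exact hlt.false
  · have hpos : 0 < α * (t ^ n * (t ^ 2 - a ^ 2) * g₀ + 2 * a * lam) :=
      calc 0 < t ^ n * (t ^ 2 - a ^ 2) * (α * g₀) + 2 * a * (α * lam) := by
            have := pow_mul_sq_sub_sq_pos hn hout
            positivity
        _ = α * (t ^ n * (t ^ 2 - a ^ 2) * g₀ + 2 * a * lam) := by ring
    rw [hroot, mul_zero] at hpos
    exact hpos.false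

/-- For `n` even positive, `a > 0`, and nonzero reals `α, λ, g₀` with
`αλ > 0`, `αg₀ > 0`, `|g₀| < 2|α|` and `|λ| > 2|α| K a^(n+1)` where
`K = (1/(n+2)) (n/(n+2))^(n/2)`, one has `t^n (t² − a²) g₀ + 2aλ ≠ 0` for every `t ∈ ℝ`. -/
theorem even_modification_no_real_root (n : ℕ) (hn : Even n) (hn' : 0 < n)
    (a : ℝ) (ha : 0 < a) (α lam g₀ : ℝ)
    (hα : α ≠ 0) (hlam : lam ≠ 0) (hg₀ : g₀ ≠ 0)
    (hαlam : α * lam > 0) (hαg : α * g₀ > 0) (hgsmall : |g₀| < 2 * |α|)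
    (hlamtbig : |lam| > 2 * |α| * ((1 / ((n : ℝ) + 2)) * ((n : ℝ) / ((n : ℝ) + 2)) ^ (n / 2))
        * a ^ (n + 1)) (t : ℝ) :
    t ^ n * (t ^ 2 - a ^ 2) * g₀ + 2 * a * lam ≠ 0 :=
  even_modification_no_real_root_general n hn a ha α lam g₀ hαlam hαg hgsmall hlamtbig t
end
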